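/- arXiv:1901.08053 — 2 statements merged into one kernel-verified Lean document; each statement's English description precedes it below -/
import Mathlib

section
/- Let n ≥ 1 and let μ be the uniform (rotation-invariant, normalized surface-area) probability measure on the unit sphere of the complex Hilbert space ℂⁿ. Then the Bochner integral over the sphere of the rank-one orthogonal projections onto ψ equals (1/n) times the identity operator: ∫_{‖ψ‖=1} |ψ⟩⟨ψ| dμ(ψ) = (1/n)·Id. (This is the decomposition of the normalized projection density matrix W_IPH as a uniform statistical mixture of pure states.) -/
open MeasureTheory
open scoped ComplexInnerProductSpace

/-- The rank-one operator `|ψ⟩⟨ψ| : φ ↦ ⟪ψ, φ⟫ • ψ`. -/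
noncomputable def ketbra {H : Type*} [NormedAddCommGroup H] [InnerProductSpace ℂ H]
    (ψ : H) : H →L[ℂ] H :=
  (innerSL ℂ ψ).smulRight ψ

section aux
variable (n : ℕ)

noncomputable def negAt (j : Fin n) : EuclideanSpace ℂ (Fin n) ≃ₗᵢ[ℂ] EuclideanSpace ℂ (Fin n) :=
  LinearIsometryEquiv.piLpCongrRight 2
    (fun k => if k = j then LinearIsometryEquiv.neg ℂ else LinearIsometryEquiv.refl ℂ ℂ)

lemma negAt_apply (j : Fin n) (x : EuclideanSpace ℂ (Fin n)) (k : Fin n) :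
    negAt n j x k = if k = j then -x k else x k := by
  simp [negAt, LinearIsometryEquiv.piLpCongrRight_apply, apply_ite (fun e : ℂ ≃ₗᵢ[ℂ] ℂ => e (x k))]

noncomputable def swapU (i k : Fin n) :
    EuclideanSpace ℂ (Fin n) ≃ₗᵢ[ℂ] EuclideanSpace ℂ (Fin n) :=
  LinearIsometryEquiv.piLpCongrLeft 2 ℂ ℂ (Equiv.swap i k)

lemma swapU_apply (i k : Fin n) (x : EuclideanSpace ℂ (Fin n)) (m : Fin n) :
    swapU n i k x m = x (Equiv.swap i k m) := by
  simp [swapU, LinearIsometryEquiv.piLpCongrLeft_apply, Equiv.piCongrLeft'_apply]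

lemma mem_sphere_map {n : ℕ}
    (U : EuclideanSpace ℂ (Fin n) ≃ₗᵢ[ℂ] EuclideanSpace ℂ (Fin n))
    (ψ : Metric.sphere (0 : EuclideanSpace ℂ (Fin n)) 1) :
    U (ψ : EuclideanSpace ℂ (Fin n)) ∈ Metric.sphere (0 : EuclideanSpace ℂ (Fin n)) 1 := by
  have := ψ.2
  simp only [mem_sphere_iff_norm, sub_zero] at this ⊢
  simp [this]

end aux

/-- for `n ≥ 1`, if `μ` is the uniform probability measure on the unit sphere of
`ℂⁿ` — i.e. a Borel probability measure invariant under every unitary (linear isometric)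
rotation — then `∫ |ψ⟩⟨ψ| dμ(ψ) = (1/n) • Id`. -/
theorem stmt_0 (n : ℕ) (hn : 1 ≤ n)
    [MeasurableSpace (EuclideanSpace ℂ (Fin n))] [BorelSpace (EuclideanSpace ℂ (Fin n))]
    (μ : Measure (Metric.sphere (0 : EuclideanSpace ℂ (Fin n)) 1))
    [IsProbabilityMeasure μ]
    (hinv : ∀ U : EuclideanSpace ℂ (Fin n) ≃ₗᵢ[ℂ] EuclideanSpace ℂ (Fin n),
      Measure.map
        (fun ψ : Metric.sphere (0 : EuclideanSpace ℂ (Fin n)) 1 =>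
          (⟨U ψ, by
            have := ψ.2
            simp only [mem_sphere_iff_norm, sub_zero] at this ⊢
            simp [this]⟩ : Metric.sphere (0 : EuclideanSpace ℂ (Fin n)) 1)) μ = μ) :
    (∫ ψ : Metric.sphere (0 : EuclideanSpace ℂ (Fin n)) 1,
        ketbra (ψ : EuclideanSpace ℂ (Fin n)) ∂μ)
      = (1 / (n : ℂ)) • ContinuousLinearMap.id ℂ (EuclideanSpace ℂ (Fin n)) := by
  -- continuity of ketbra
  have hc : Continuous fun ψ : Metric.sphere (0 : EuclideanSpace ℂ (Fin n)) 1 =>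
      ketbra (ψ : EuclideanSpace ℂ (Fin n)) := by
    have h1 := (innerSL ℂ (E := EuclideanSpace ℂ (Fin n))).continuous.comp
      (continuous_subtype_val (p := (· ∈ Metric.sphere (0 : EuclideanSpace ℂ (Fin n)) 1)))
    have h2 := (ContinuousLinearMap.smulRightL ℂ (EuclideanSpace ℂ (Fin n))
      (EuclideanSpace ℂ (Fin n))).continuous.comp h1
    exact h2.clm_apply continuous_subtype_val
  have hint : Integrable (fun ψ : Metric.sphere (0 : EuclideanSpace ℂ (Fin n)) 1 =>
      ketbra (ψ : EuclideanSpace ℂ (Fin n))) μ :=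
    hc.integrable_of_hasCompactSupport (HasCompactSupport.of_compactSpace _)
  -- change of variables
  have key : ∀ U : EuclideanSpace ℂ (Fin n) ≃ₗᵢ[ℂ] EuclideanSpace ℂ (Fin n),
      ∀ f : Metric.sphere (0 : EuclideanSpace ℂ (Fin n)) 1 → ℂ, Continuous f →
      (∫ ψ : Metric.sphere (0 : EuclideanSpace ℂ (Fin n)) 1,
        f ⟨U ψ, mem_sphere_map U ψ⟩ ∂μ) = ∫ ψ, f ψ ∂μ := by
    intro U f hf
    have hg : Measurable (fun ψ : Metric.sphere (0 : EuclideanSpace ℂ (Fin n)) 1 =>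
        (⟨U ψ, mem_sphere_map U ψ⟩ : Metric.sphere (0 : EuclideanSpace ℂ (Fin n)) 1)) :=
      (Continuous.subtype_mk (U.continuous.comp continuous_subtype_val) _).measurable
    have hU : Measure.map (fun ψ : Metric.sphere (0 : EuclideanSpace ℂ (Fin n)) 1 =>
        (⟨U ψ, mem_sphere_map U ψ⟩ : Metric.sphere (0 : EuclideanSpace ℂ (Fin n)) 1)) μ = μ :=
      hinv U
    conv_rhs => rw [← hU]
    rw [integral_map hg.aemeasurable]
    exact hU ▸ hf.aestronglyMeasurable
  -- entry functions
  have hco : ∀ k : Fin n, Continuous fun ψ : Metric.sphere (0 : EuclideanSpace ℂ (Fin n)) 1 =>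
      (ψ : EuclideanSpace ℂ (Fin n)) k := fun k =>
    (EuclideanSpace.proj k).continuous.comp continuous_subtype_val
  have hent : ∀ i j : Fin n, Continuous
      (fun ψ : Metric.sphere (0 : EuclideanSpace ℂ (Fin n)) 1 =>
        (starRingEnd ℂ) ((ψ : EuclideanSpace ℂ (Fin n)) j)
          * (ψ : EuclideanSpace ℂ (Fin n)) i) := fun i j => ((hco j).star.mul (hco i))
  have hentInt : ∀ i j : Fin n, Integrable
      (fun ψ : Metric.sphere (0 : EuclideanSpace ℂ (Fin n)) 1 =>
        (starRingEnd ℂ) ((ψ : EuclideanSpace ℂ (Fin n)) j)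
          * (ψ : EuclideanSpace ℂ (Fin n)) i) μ := fun i j =>
    (hent i j).integrable_of_hasCompactSupport (HasCompactSupport.of_compactSpace _)
  -- off-diagonal entries vanish
  have hoff : ∀ i j : Fin n, i ≠ j →
      (∫ ψ : Metric.sphere (0 : EuclideanSpace ℂ (Fin n)) 1,
        (starRingEnd ℂ) ((ψ : EuclideanSpace ℂ (Fin n)) j)
          * (ψ : EuclideanSpace ℂ (Fin n)) i ∂μ) = 0 := by
    intro i j hij
    have h := key (negAt n j) _ (hent i j)
    have heq : ∀ ψ : Metric.sphere (0 : EuclideanSpace ℂ (Fin n)) 1,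
        (starRingEnd ℂ) ((negAt n j (ψ : EuclideanSpace ℂ (Fin n))) j)
            * (negAt n j (ψ : EuclideanSpace ℂ (Fin n))) i
          = -((starRingEnd ℂ) ((ψ : EuclideanSpace ℂ (Fin n)) j)
            * (ψ : EuclideanSpace ℂ (Fin n)) i) := by
      intro ψ
      rw [negAt_apply, negAt_apply, if_pos rfl, if_neg hij]
      simp
    simp only [heq] at h
    rw [integral_neg] at h
    linear_combination (-1/2 : ℂ) * h
  -- diagonal entries all equal
  have hswap : ∀ i k : Fin n,
      (∫ ψ : Metric.sphere (0 : EuclideanSpace ℂ (Fin n)) 1,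
        (starRingEnd ℂ) ((ψ : EuclideanSpace ℂ (Fin n)) i)
          * (ψ : EuclideanSpace ℂ (Fin n)) i ∂μ)
      = ∫ ψ : Metric.sphere (0 : EuclideanSpace ℂ (Fin n)) 1,
        (starRingEnd ℂ) ((ψ : EuclideanSpace ℂ (Fin n)) k)
          * (ψ : EuclideanSpace ℂ (Fin n)) k ∂μ := by
    intro i k
    have h := key (swapU n i k) _ (hent i i)
    have heq : ∀ ψ : Metric.sphere (0 : EuclideanSpace ℂ (Fin n)) 1,
        (starRingEnd ℂ) ((swapU n i k (ψ : EuclideanSpace ℂ (Fin n))) i)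
            * (swapU n i k (ψ : EuclideanSpace ℂ (Fin n))) i
          = (starRingEnd ℂ) ((ψ : EuclideanSpace ℂ (Fin n)) k)
            * (ψ : EuclideanSpace ℂ (Fin n)) k := by
      intro ψ
      rw [swapU_apply, Equiv.swap_apply_left]
    simp only [heq] at h
    exact h.symm
  -- sum of diagonal entries is 1
  have hsum : (∑ i : Fin n, ∫ ψ : Metric.sphere (0 : EuclideanSpace ℂ (Fin n)) 1,
      (starRingEnd ℂ) ((ψ : EuclideanSpace ℂ (Fin n)) i)
        * (ψ : EuclideanSpace ℂ (Fin n)) i ∂μ) = 1 := by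
    rw [← integral_finset_sum _ (fun i _ => hentInt i i)]
    have hone : ∀ ψ : Metric.sphere (0 : EuclideanSpace ℂ (Fin n)) 1,
        (∑ i : Fin n, (starRingEnd ℂ) ((ψ : EuclideanSpace ℂ (Fin n)) i)
          * (ψ : EuclideanSpace ℂ (Fin n)) i) = 1 := by
      intro ψ
      have h1 : (∑ i : Fin n, (starRingEnd ℂ) ((ψ : EuclideanSpace ℂ (Fin n)) i)
          * (ψ : EuclideanSpace ℂ (Fin n)) i)
          = ⟪(ψ : EuclideanSpace ℂ (Fin n)), (ψ : EuclideanSpace ℂ (Fin n))⟫ := by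
        rw [PiLp.inner_apply]
        simp only [RCLike.inner_apply']
      have h2 : ‖(ψ : EuclideanSpace ℂ (Fin n))‖ = 1 := by
        have := ψ.2
        simpa [mem_sphere_iff_norm] using this
      rw [h1, inner_self_eq_norm_sq_to_K, h2]
      norm_num
    simp_rw [hone]
    simp
  -- diagonal entries equal 1/n
  have hdiag : ∀ i : Fin n,
      (∫ ψ : Metric.sphere (0 : EuclideanSpace ℂ (Fin n)) 1,
        (starRingEnd ℂ) ((ψ : EuclideanSpace ℂ (Fin n)) i)
          * (ψ : EuclideanSpace ℂ (Fin n)) i ∂μ) = 1 / (n : ℂ) := by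
    intro i
    have hns : (n : ℂ) ≠ 0 := by
      exact_mod_cast Nat.cast_ne_zero.mpr (by omega)
    have h : (∑ k : Fin n, ∫ ψ : Metric.sphere (0 : EuclideanSpace ℂ (Fin n)) 1,
        (starRingEnd ℂ) ((ψ : EuclideanSpace ℂ (Fin n)) k)
          * (ψ : EuclideanSpace ℂ (Fin n)) k ∂μ)
        = (n : ℂ) * ∫ ψ : Metric.sphere (0 : EuclideanSpace ℂ (Fin n)) 1,
        (starRingEnd ℂ) ((ψ : EuclideanSpace ℂ (Fin n)) i)
          * (ψ : EuclideanSpace ℂ (Fin n)) i ∂μ := by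
      rw [Finset.sum_congr rfl (fun k _ => (hswap i k).symm)]
      simp [mul_comm]
    rw [hsum] at h
    field_simp
    linear_combination -h
  -- assemble
  apply ContinuousLinearMap.coe_injective
  apply Module.Basis.ext (PiLp.basisFun 2 ℂ (Fin n))
  intro j
  have hb : (PiLp.basisFun 2 ℂ (Fin n)) j = EuclideanSpace.single j (1 : ℂ) := by
    rw [PiLp.basisFun_apply]
  rw [hb]
  show (∫ ψ : Metric.sphere (0 : EuclideanSpace ℂ (Fin n)) 1,
      ketbra (ψ : EuclideanSpace ℂ (Fin n)) ∂μ) (EuclideanSpace.single j (1 : ℂ))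
    = ((1 / (n : ℂ)) • ContinuousLinearMap.id ℂ (EuclideanSpace ℂ (Fin n)))
        (EuclideanSpace.single j (1 : ℂ))
  rw [ContinuousLinearMap.integral_apply hint]
  have hintj : Integrable (fun ψ : Metric.sphere (0 : EuclideanSpace ℂ (Fin n)) 1 =>
      ketbra (ψ : EuclideanSpace ℂ (Fin n)) (EuclideanSpace.single j (1 : ℂ))) μ :=
    hint.apply_continuousLinearMap _
  ext i
  have hproj := (ContinuousLinearMap.integral_comp_comm (EuclideanSpace.proj (𝕜 := ℂ) i) hintj)
  simp only [PiLp.proj_apply] at hproj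
  rw [show ((∫ ψ : Metric.sphere (0 : EuclideanSpace ℂ (Fin n)) 1,
      ketbra (ψ : EuclideanSpace ℂ (Fin n)) (EuclideanSpace.single j (1 : ℂ)) ∂μ) i)
    = ∫ ψ : Metric.sphere (0 : EuclideanSpace ℂ (Fin n)) 1,
      (ketbra (ψ : EuclideanSpace ℂ (Fin n)) (EuclideanSpace.single j (1 : ℂ))) i ∂μ
    from hproj.symm]
  have hval : ∀ ψ : Metric.sphere (0 : EuclideanSpace ℂ (Fin n)) 1,
      (ketbra (ψ : EuclideanSpace ℂ (Fin n)) (EuclideanSpace.single j (1 : ℂ))) i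
        = (starRingEnd ℂ) ((ψ : EuclideanSpace ℂ (Fin n)) j)
          * (ψ : EuclideanSpace ℂ (Fin n)) i := by
    intro ψ
    simp [ketbra, EuclideanSpace.inner_single_right]
  simp_rw [hval]
  rcases eq_or_ne i j with rfl | hij
  · rw [hdiag i]
    simp [EuclideanSpace.single_apply]
  · rw [hoff i j hij]
    simp [EuclideanSpace.single_apply, hij]
end

section
/- Let W : ℝ × ℝ^d × ℝ^d → ℂ be a smooth function satisfying the von Neumann (kernel) equation i ∂_t W(t,q,q') = [ −(1/2) Δ_q + V(q) ] W(t,q,q') − [ −(1/2) Δ_{q'} + V(q') ] W(t,q,q'), where V : ℝ^d → ℝ is real-valued (units ℏ = m = 1), and suppose W is Hermitian symmetric: W(t,q,q') = conj( W(t,q',q) ) for all t, q, q'. Then the diagonal density ρ(t,q) = W(t,q,q) is real and satisfies the continuity equation ∂_t ρ(t,q) = − div_q J(t,q), where J(t,q) is the vector field whose j-th component is Im( ∂_{q_j} W(t,q,q') evaluated at q' = q ). This is the equivariance of the W(q,q,t) distribution under von Neumann evolution. -/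
open Complex

/-- The time direction in `ℝ × ℝ^d × ℝ^d`. -/
def tdir3 (d : ℕ) : ℝ × (Fin d → ℝ) × (Fin d → ℝ) := (1, 0, 0)

/-- The `j`-th direction of the first spatial variable in `ℝ × ℝ^d × ℝ^d`. -/
def q1dir (d : ℕ) (j : Fin d) : ℝ × (Fin d → ℝ) × (Fin d → ℝ) := (0, Pi.single j 1, 0)

/-- The `j`-th direction of the second spatial variable in `ℝ × ℝ^d × ℝ^d`. -/
def q2dir (d : ℕ) (j : Fin d) : ℝ × (Fin d → ℝ) × (Fin d → ℝ) := (0, 0, Pi.single j 1)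

/-- Laplacian in the first spatial variable, `Δ_q`. -/
noncomputable def lapQ1 {d : ℕ} (W : ℝ × (Fin d → ℝ) × (Fin d → ℝ) → ℂ)
    (p : ℝ × (Fin d → ℝ) × (Fin d → ℝ)) : ℂ :=
  ∑ j, fderiv ℝ (fun p' => fderiv ℝ W p' (q1dir d j)) p (q1dir d j)

/-- Laplacian in the second spatial variable, `Δ_{q'}`. -/
noncomputable def lapQ2 {d : ℕ} (W : ℝ × (Fin d → ℝ) × (Fin d → ℝ) → ℂ)
    (p : ℝ × (Fin d → ℝ) × (Fin d → ℝ)) : ℂ :=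
  ∑ j, fderiv ℝ (fun p' => fderiv ℝ W p' (q2dir d j)) p (q2dir d j)

/-- The swap of spatial variables as a continuous linear map. -/
noncomputable def swapCLM (d : ℕ) :
    (ℝ × (Fin d → ℝ) × (Fin d → ℝ)) →L[ℝ] (ℝ × (Fin d → ℝ) × (Fin d → ℝ)) :=
  (ContinuousLinearMap.fst ℝ ℝ ((Fin d → ℝ) × (Fin d → ℝ))).prod
    ((((ContinuousLinearMap.snd ℝ (Fin d → ℝ) (Fin d → ℝ))).prod
      (ContinuousLinearMap.fst ℝ (Fin d → ℝ) (Fin d → ℝ))).comp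
      (ContinuousLinearMap.snd ℝ ℝ ((Fin d → ℝ) × (Fin d → ℝ))))

/-- The diagonal embedding as a continuous linear map. -/
noncomputable def diagCLM (d : ℕ) :
    (ℝ × (Fin d → ℝ)) →L[ℝ] (ℝ × (Fin d → ℝ) × (Fin d → ℝ)) :=
  (ContinuousLinearMap.fst ℝ ℝ (Fin d → ℝ)).prod
    ((ContinuousLinearMap.snd ℝ ℝ (Fin d → ℝ)).prod (ContinuousLinearMap.snd ℝ ℝ (Fin d → ℝ)))

lemma fderiv_conj_comp {E : Type*} [NormedAddCommGroup E] [NormedSpace ℝ E]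
    (g : E → ℂ) (hg : Differentiable ℝ g) (σ : E →L[ℝ] E) (p v : E) :
    fderiv ℝ (fun x => (starRingEnd ℂ) (g (σ x))) p v
      = (starRingEnd ℂ) (fderiv ℝ g (σ p) (σ v)) := by
  have h2 : HasFDerivAt (fun x => g (σ x)) ((fderiv ℝ g (σ p)).comp σ) p :=
    (hg (σ p)).hasFDerivAt.comp p (σ.hasFDerivAt)
  have h3 : HasFDerivAt (fun x => (starRingEnd ℂ) (g (σ x)))
      ((Complex.conjCLE : ℂ →L[ℝ] ℂ).comp ((fderiv ℝ g (σ p)).comp σ)) p :=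
    ((Complex.conjCLE : ℂ →L[ℝ] ℂ).hasFDerivAt).comp p h2
  rw [h3.fderiv]; rfl

lemma fderiv_re_comp {E F : Type*} [NormedAddCommGroup E] [NormedSpace ℝ E]
    [NormedAddCommGroup F] [NormedSpace ℝ F]
    (g : F → ℂ) (hg : Differentiable ℝ g) (L : E →L[ℝ] F) (p : E) (v : E) :
    fderiv ℝ (fun x => (g (L x)).re) p v = (fderiv ℝ g (L p) (L v)).re := by
  have h2 : HasFDerivAt (fun x => g (L x)) ((fderiv ℝ g (L p)).comp L) p :=
    ((hg (L p)).hasFDerivAt).comp p L.hasFDerivAt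
  have h3 : HasFDerivAt (fun x => (g (L x)).re)
      (Complex.reCLM.comp ((fderiv ℝ g (L p)).comp L)) p :=
    (Complex.reCLM.hasFDerivAt).comp p h2
  rw [h3.fderiv]; rfl

lemma fderiv_im_comp {E F : Type*} [NormedAddCommGroup E] [NormedSpace ℝ E]
    [NormedAddCommGroup F] [NormedSpace ℝ F]
    (g : F → ℂ) (hg : Differentiable ℝ g) (L : E →L[ℝ] F) (p : E) (v : E) :
    fderiv ℝ (fun x => (g (L x)).im) p v = (fderiv ℝ g (L p) (L v)).im := by
  have h2 : HasFDerivAt (fun x => g (L x)) ((fderiv ℝ g (L p)).comp L) p :=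
    ((hg (L p)).hasFDerivAt).comp p L.hasFDerivAt
  have h3 : HasFDerivAt (fun x => (g (L x)).im)
      (Complex.imCLM.comp ((fderiv ℝ g (L p)).comp L)) p :=
    (Complex.imCLM.hasFDerivAt).comp p h2
  rw [h3.fderiv]; rfl

lemma fderiv_dir_eq {E : Type*} [NormedAddCommGroup E] [NormedSpace ℝ E]
    (W : E → ℂ) (hW : ContDiff ℝ (⊤ : ℕ∞) W) (p v w : E) :
    fderiv ℝ (fun x => fderiv ℝ W x v) p w = fderiv ℝ (fderiv ℝ W) p w v := by
  have hc : DifferentiableAt ℝ (fderiv ℝ W) p :=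
    ((hW.fderiv_right (m := 1) (WithTop.coe_le_coe.mpr le_top)).differentiable one_ne_zero) p
  rw [fderiv_clm_apply hc (differentiableAt_const v)]
  simp

lemma schwarz_dir {E : Type*} [NormedAddCommGroup E] [NormedSpace ℝ E]
    (W : E → ℂ) (hW : ContDiff ℝ (⊤ : ℕ∞) W) (p v w : E) :
    fderiv ℝ (fun x => fderiv ℝ W x v) p w = fderiv ℝ (fun x => fderiv ℝ W x w) p v := by
  rw [fderiv_dir_eq W hW p v w, fderiv_dir_eq W hW p w v]
  exact (hW.contDiffAt.isSymmSndFDerivAt (by simp; exact WithTop.coe_le_coe.mpr le_top)).eq w v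

/-- if the Hermitian-symmetric kernel `W(t,q,q')` is a smooth solution of the
von Neumann kernel equation
`i ∂_t W = [−(1/2)Δ_q + V(q)] W − [−(1/2)Δ_{q'} + V(q')] W` with real potential `V`
(ℏ = m = 1), then the diagonal density `ρ(t,q) = W(t,q,q)` is real and satisfies the
continuity equation `∂_t ρ = − div_q J`, where `J_j(t,q) = Im(∂_{q_j} W(t,q,q')|_{q'=q})`. -/
theorem stmt_10 (d : ℕ) (W : ℝ × (Fin d → ℝ) × (Fin d → ℝ) → ℂ) (V : (Fin d → ℝ) → ℝ)
    (hW : ContDiff ℝ (⊤ : ℕ∞) W)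
    (hherm : ∀ (t : ℝ) (q q' : Fin d → ℝ), W (t, q, q') = (starRingEnd ℂ) (W (t, q', q)))
    (hvN : ∀ p : ℝ × (Fin d → ℝ) × (Fin d → ℝ),
      Complex.I * fderiv ℝ W p (tdir3 d)
        = (-(1/2 : ℂ) * lapQ1 W p + (V p.2.1 : ℂ) * W p)
          - (-(1/2 : ℂ) * lapQ2 W p + (V p.2.2 : ℂ) * W p)) :
    (∀ (t : ℝ) (q : Fin d → ℝ), (W (t, q, q)).im = 0) ∧
    (∀ (t : ℝ) (q : Fin d → ℝ),
      fderiv ℝ (fun s : ℝ × (Fin d → ℝ) => (W (s.1, s.2, s.2)).re) (t, q)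
          ((1, 0) : ℝ × (Fin d → ℝ))
        = - ∑ j, fderiv ℝ
            (fun s : ℝ × (Fin d → ℝ) => (fderiv ℝ W (s.1, s.2, s.2) (q1dir d j)).im)
            (t, q) ((0, Pi.single j 1) : ℝ × (Fin d → ℝ))) := by
  have hWd : Differentiable ℝ W := hW.differentiable (by simp)
  have hFd : ∀ v, Differentiable ℝ (fun x => fderiv ℝ W x v) := fun v =>
    ((hW.fderiv_right (m := 1) (WithTop.coe_le_coe.mpr le_top)).clm_apply contDiff_const).differentiable one_ne_zero
  have hsymW : W = fun x => (starRingEnd ℂ) (W (swapCLM d x)) :=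
    funext fun p => hherm p.1 p.2.1 p.2.2
  have hd1 : ∀ p v, fderiv ℝ W p v
      = (starRingEnd ℂ) (fderiv ℝ W (swapCLM d p) (swapCLM d v)) := by
    intro p v
    conv_lhs => rw [hsymW]
    exact fderiv_conj_comp W hWd (swapCLM d) p v
  have hd2 : ∀ p v w, fderiv ℝ (fun x => fderiv ℝ W x v) p w
      = (starRingEnd ℂ)
          (fderiv ℝ (fun x => fderiv ℝ W x (swapCLM d v)) (swapCLM d p) (swapCLM d w)) := by
    intro p v w
    have heq : (fun x => fderiv ℝ W x v)
        = fun x => (starRingEnd ℂ) ((fun y => fderiv ℝ W y (swapCLM d v)) (swapCLM d x)) :=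
      funext fun x => hd1 x v
    conv_lhs => rw [heq]
    exact fderiv_conj_comp _ (hFd _) (swapCLM d) p w
  refine ⟨fun t q => ?_, fun t q => ?_⟩
  · have h := congrArg Complex.im (hherm t q q)
    simp only [Complex.conj_im] at h
    linarith
  · set p : ℝ × (Fin d → ℝ) × (Fin d → ℝ) := (t, q, q) with hp
    -- lapQ2 = conj lapQ1 on the diagonal
    have hlap : lapQ2 W p = (starRingEnd ℂ) (lapQ1 W p) := by
      unfold lapQ1 lapQ2
      rw [map_sum]
      refine Finset.sum_congr rfl fun j _ => ?_
      exact hd2 p (q2dir d j) (q2dir d j)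
    -- time derivative on the diagonal
    have hD : fderiv ℝ W p (tdir3 d) = -(((lapQ1 W p).im : ℂ)) := by
      have h := hvN p
      rw [hlap] at h
      have hq1 : p.2.1 = q := rfl
      have hq2 : p.2.2 = q := rfl
      rw [hq1, hq2] at h
      have h2 : Complex.I * fderiv ℝ W p (tdir3 d)
          = -(1/2 : ℂ) * (lapQ1 W p - (starRingEnd ℂ) (lapQ1 W p)) := by
        rw [h]; ring
      rw [Complex.sub_conj] at h2
      have h3 : Complex.I * fderiv ℝ W p (tdir3 d)
          = Complex.I * (-(((lapQ1 W p).im : ℂ))) := by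
        rw [h2]; push_cast; ring
      exact mul_left_cancel₀ Complex.I_ne_zero h3
    -- LHS
    have hLHS : fderiv ℝ (fun s : ℝ × (Fin d → ℝ) => (W (s.1, s.2, s.2)).re) (t, q)
        ((1, 0) : ℝ × (Fin d → ℝ)) = -((lapQ1 W p).im) := by
      have h1 : fderiv ℝ (fun s : ℝ × (Fin d → ℝ) => (W (diagCLM d s)).re) (t, q)
          ((1, 0) : ℝ × (Fin d → ℝ))
          = (fderiv ℝ W (diagCLM d (t, q)) (diagCLM d ((1, 0) : ℝ × (Fin d → ℝ)))).re :=
        fderiv_re_comp W hWd (diagCLM d) (t, q) _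
      have h2 : fderiv ℝ (fun s : ℝ × (Fin d → ℝ) => (W (s.1, s.2, s.2)).re) (t, q)
          ((1, 0) : ℝ × (Fin d → ℝ)) = (fderiv ℝ W p (tdir3 d)).re := h1
      rw [h2, hD]
      simp
    -- RHS terms
    have hRHS : ∀ j : Fin d,
        fderiv ℝ (fun s : ℝ × (Fin d → ℝ) => (fderiv ℝ W (s.1, s.2, s.2) (q1dir d j)).im)
            (t, q) ((0, Pi.single j 1) : ℝ × (Fin d → ℝ))
          = (fderiv ℝ (fun x => fderiv ℝ W x (q1dir d j)) p (q1dir d j)).im := by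
      intro j
      have h1 : fderiv ℝ
          (fun s : ℝ × (Fin d → ℝ) =>
            ((fun x => fderiv ℝ W x (q1dir d j)) (diagCLM d s)).im) (t, q)
            ((0, Pi.single j 1) : ℝ × (Fin d → ℝ))
          = (fderiv ℝ (fun x => fderiv ℝ W x (q1dir d j)) (diagCLM d (t, q))
              (diagCLM d ((0, Pi.single j 1) : ℝ × (Fin d → ℝ)))).im :=
        fderiv_im_comp _ (hFd _) (diagCLM d) (t, q) _
      have h2 : fderiv ℝ
          (fun s : ℝ × (Fin d → ℝ) => (fderiv ℝ W (s.1, s.2, s.2) (q1dir d j)).im) (t, q)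
            ((0, Pi.single j 1) : ℝ × (Fin d → ℝ))
          = (fderiv ℝ (fun x => fderiv ℝ W x (q1dir d j)) p
              (diagCLM d ((0, Pi.single j 1) : ℝ × (Fin d → ℝ)))).im := h1
      have hdir : diagCLM d ((0, Pi.single j 1) : ℝ × (Fin d → ℝ))
          = q1dir d j + q2dir d j := by
        simp [diagCLM, q1dir, q2dir, Prod.ext_iff]
      rw [h2, hdir, map_add, Complex.add_im]
      -- mixed term is real
      have hM : fderiv ℝ (fun x => fderiv ℝ W x (q1dir d j)) p (q2dir d j)
          = (starRingEnd ℂ) (fderiv ℝ (fun x => fderiv ℝ W x (q2dir d j)) p (q1dir d j)) :=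
        hd2 p (q1dir d j) (q2dir d j)
      rw [schwarz_dir W hW p (q2dir d j) (q1dir d j)] at hM
      have hM0 : (fderiv ℝ (fun x => fderiv ℝ W x (q1dir d j)) p (q2dir d j)).im = 0 := by
        have := congrArg Complex.im hM
        simp only [Complex.conj_im] at this
        linarith
      rw [hM0, add_zero]
    rw [hLHS]
    rw [Finset.sum_congr rfl fun j _ => hRHS j]
    congr 1
    unfold lapQ1
    rw [Complex.im_sum]
end
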